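/- arXiv:1804.08662 — 4 statements merged into one kernel-verified Lean document; each statement's English description precedes it below -/
import Mathlib

section
/- Let F : Mat_{ℓ×n}(F_2) → F_2^ℓ be such that, for uniformly random M ∈ Mat_{ℓ×n}(F_2), a ∈ F_2^ℓ, b ∈ F_2^n, the probability that F(M + a bᵀ) ∈ {F(M), F(M) + a} is at least η. Then there exists h ∈ F_2^n such that, defining G(M) = F(M) + M h, the probability over random M, a, b that G(M + a bᵀ) = G(M) is at least η/2. -/
open Finset Matrix

lemma dot_card {n : ℕ} (b : Fin n → ZMod 2) (c : ZMod 2) (hb : b ≠ 0 ∨ c = 0) :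
    2 ^ (n - 1) ≤ (Finset.univ.filter fun h : Fin n → ZMod 2 => b ⬝ᵥ h = c).card := by
  rcases eq_or_ne b 0 with rfl | hb0
  · have hc : c = 0 := hb.resolve_left (by simp)
    subst hc
    have : (Finset.univ.filter fun h : Fin n → ZMod 2 => (0 : Fin n → ZMod 2) ⬝ᵥ h = 0) =
        Finset.univ := by
      ext h; simp [dotProduct]
    rw [this]
    simp [Finset.card_univ]
    exact Nat.pow_le_pow_right (by norm_num) (Nat.sub_le _ _)
  · obtain ⟨i, hi⟩ := Function.ne_iff.mp hb0
    have hone : ∀ x : ZMod 2, x ≠ 0 → x = 1 := by decide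
    have hbi : b i = 1 := hone _ (by simpa using hi)
    have hcard : ∀ c' : ZMod 2,
        (Finset.univ.filter fun h : Fin n → ZMod 2 => b ⬝ᵥ h = c').card =
        (Finset.univ.filter fun h : Fin n → ZMod 2 => b ⬝ᵥ h = c' + 1).card := by
      intro c'
      apply Finset.card_nbij' (fun h => h + Pi.single i 1) (fun h => h + Pi.single i 1)
      · intro h hh
        simp only [Finset.mem_coe, Finset.mem_filter, Finset.mem_univ, true_and] at hh ⊢
        rw [dotProduct_add, dotProduct_single, hbi, hh]; ring
      · intro h hh
        simp only [Finset.mem_coe, Finset.mem_filter, Finset.mem_univ, true_and] at hh ⊢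
        rw [dotProduct_add, dotProduct_single, hbi, hh, mul_one]
        have h2 : ∀ x : ZMod 2, x + 1 + 1 = x := by decide
        exact h2 _
      · intro h _; funext j; simp only [Pi.add_apply]
        rcases eq_or_ne j i with rfl | hj
        · have h2 : ∀ x : ZMod 2, x + 1 + 1 = x := by decide
          simp [h2]
        · simp [Pi.single_eq_of_ne hj]
      · intro h _; funext j; simp only [Pi.add_apply]
        rcases eq_or_ne j i with rfl | hj
        · have h2 : ∀ x : ZMod 2, x + 1 + 1 = x := by decide
          simp [h2]
        · simp [Pi.single_eq_of_ne hj]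
    have hsplit : (Finset.univ.filter fun h : Fin n → ZMod 2 => b ⬝ᵥ h = c).card +
        (Finset.univ.filter fun h : Fin n → ZMod 2 => ¬ (b ⬝ᵥ h = c)).card =
        Fintype.card (Fin n → ZMod 2) :=
      Finset.card_filter_add_card_filter_not _
    have hne : (Finset.univ.filter fun h : Fin n → ZMod 2 => ¬ (b ⬝ᵥ h = c)) =
        (Finset.univ.filter fun h : Fin n → ZMod 2 => b ⬝ᵥ h = c + 1) := by
      apply Finset.filter_congr
      intro h _
      have : ∀ x c : ZMod 2, (¬ x = c) ↔ x = c + 1 := by decide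
      exact this _ _
    rw [hne, ← hcard c] at hsplit
    have hcardu : Fintype.card (Fin n → ZMod 2) = 2 ^ n := by
      simp [Fintype.card_fun]
    have hn1 : 1 ≤ n := Nat.one_le_iff_ne_zero.mpr (by rintro rfl; exact absurd i.2 (by simp))
    have : 2 ^ n = 2 * 2 ^ (n - 1) := by
      rw [← pow_succ']
      congr 1; omega
    omega

lemma vmv_mulVec {ℓ n : ℕ} (a : Fin ℓ → ZMod 2) (b h : Fin n → ZMod 2) :
    (Matrix.vecMulVec a b).mulVec h = (b ⬝ᵥ h) • a := by
  funext i
  simp [Matrix.mulVec, Matrix.vecMulVec, dotProduct, Finset.mul_sum,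
    mul_comm, mul_assoc, mul_left_comm]

lemma per_p {ℓ n : ℕ} (F : Matrix (Fin ℓ) (Fin n) (ZMod 2) → (Fin ℓ → ZMod 2))
    (M : Matrix (Fin ℓ) (Fin n) (ZMod 2)) (a : Fin ℓ → ZMod 2) (b : Fin n → ZMod 2)
    (hp : F (M + Matrix.vecMulVec a b) = F M ∨
          F (M + Matrix.vecMulVec a b) = F M + a) :
    2 ^ (n - 1) ≤ (Finset.univ.filter fun h : Fin n → ZMod 2 =>
        F (M + Matrix.vecMulVec a b) + (M + Matrix.vecMulVec a b).mulVec h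
          = F M + M.mulVec h).card := by
  by_cases h1 : F (M + Matrix.vecMulVec a b) = F M
  · refine le_trans (dot_card b 0 (Or.inr rfl)) (Finset.card_le_card ?_)
    intro h hh
    simp only [Finset.mem_filter, Finset.mem_univ, true_and] at hh ⊢
    rw [h1, Matrix.add_mulVec, vmv_mulVec, hh, zero_smul, add_zero]
  · have h2 : F (M + Matrix.vecMulVec a b) = F M + a := hp.resolve_left h1
    have hb : b ≠ 0 := by
      rintro rfl
      apply h1
      have hz : Matrix.vecMulVec a (0 : Fin n → ZMod 2) = 0 := by
        ext i j; simp [Matrix.vecMulVec]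
      rw [hz, add_zero]
    refine le_trans (dot_card b 1 (Or.inl hb)) (Finset.card_le_card ?_)
    intro h hh
    simp only [Finset.mem_filter, Finset.mem_univ, true_and] at hh ⊢
    rw [h2, Matrix.add_mulVec, vmv_mulVec, hh, one_smul]
    funext i
    simp only [Pi.add_apply]
    have h4 : ∀ x y z : ZMod 2, x + y + (z + y) = x + z := by decide
    exact h4 _ _ _

/-- If `F` passes the 2-to-2 shortcode test with probability at least `η`, then there is
`h` such that `G(M) = F(M) + M h` passes the unique shortcode test with probability at
least `η / 2`. -/
theorem stmt_3 (ℓ n : ℕ) (hℓ : 1 ≤ ℓ) (hn : 1 ≤ n) (η : ℝ)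
    (F : Matrix (Fin ℓ) (Fin n) (ZMod 2) → (Fin ℓ → ZMod 2))
    (hF : η * (Fintype.card (Matrix (Fin ℓ) (Fin n) (ZMod 2) ×
            (Fin ℓ → ZMod 2) × (Fin n → ZMod 2)) : ℝ)
        ≤ ((Finset.univ.filter fun p : Matrix (Fin ℓ) (Fin n) (ZMod 2) ×
              (Fin ℓ → ZMod 2) × (Fin n → ZMod 2) =>
            F (p.1 + Matrix.vecMulVec p.2.1 p.2.2) = F p.1 ∨
            F (p.1 + Matrix.vecMulVec p.2.1 p.2.2) = F p.1 + p.2.1).card : ℝ)) :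
    ∃ h : Fin n → ZMod 2,
      η / 2 * (Fintype.card (Matrix (Fin ℓ) (Fin n) (ZMod 2) ×
            (Fin ℓ → ZMod 2) × (Fin n → ZMod 2)) : ℝ)
        ≤ ((Finset.univ.filter fun p : Matrix (Fin ℓ) (Fin n) (ZMod 2) ×
              (Fin ℓ → ZMod 2) × (Fin n → ZMod 2) =>
            F (p.1 + Matrix.vecMulVec p.2.1 p.2.2)
                + (p.1 + Matrix.vecMulVec p.2.1 p.2.2).mulVec h
              = F p.1 + p.1.mulVec h).card : ℝ) := by
  classical
  set P := Matrix (Fin ℓ) (Fin n) (ZMod 2) × (Fin ℓ → ZMod 2) × (Fin n → ZMod 2)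
  set S : Finset P := Finset.univ.filter fun p =>
      F (p.1 + Matrix.vecMulVec p.2.1 p.2.2) = F p.1 ∨
      F (p.1 + Matrix.vecMulVec p.2.1 p.2.2) = F p.1 + p.2.1 with hS
  set T : (Fin n → ZMod 2) → Finset P := fun h => Finset.univ.filter fun p =>
      F (p.1 + Matrix.vecMulVec p.2.1 p.2.2)
          + (p.1 + Matrix.vecMulVec p.2.1 p.2.2).mulVec h
        = F p.1 + p.1.mulVec h with hT
  -- double counting
  have key : 2 ^ (n - 1) * S.card ≤ ∑ h : Fin n → ZMod 2, (T h).card := by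
    calc 2 ^ (n - 1) * S.card = ∑ _p ∈ S, 2 ^ (n - 1) := by
          rw [Finset.sum_const, smul_eq_mul, mul_comm]
      _ ≤ ∑ p ∈ S, (Finset.univ.filter fun h : Fin n → ZMod 2 =>
            F (p.1 + Matrix.vecMulVec p.2.1 p.2.2)
                + (p.1 + Matrix.vecMulVec p.2.1 p.2.2).mulVec h
              = F p.1 + p.1.mulVec h).card := by
          apply Finset.sum_le_sum
          intro p hp
          rw [hS, Finset.mem_filter] at hp
          exact per_p F p.1 p.2.1 p.2.2 hp.2
      _ ≤ ∑ p : P, (Finset.univ.filter fun h : Fin n → ZMod 2 =>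
            F (p.1 + Matrix.vecMulVec p.2.1 p.2.2)
                + (p.1 + Matrix.vecMulVec p.2.1 p.2.2).mulVec h
              = F p.1 + p.1.mulVec h).card :=
          Finset.sum_le_sum_of_subset (Finset.subset_univ _)
      _ = ∑ h : Fin n → ZMod 2, (T h).card := by
          simp only [hT, Finset.card_filter]
          rw [Finset.sum_comm]
  -- pigeonhole
  have hcard2 : (Fintype.card (Fin n → ZMod 2) : ℝ) = 2 ^ n := by
    simp [Fintype.card_fun]
  have key' : ∑ _h : Fin n → ZMod 2, ((S.card : ℝ) / 2) ≤
      ∑ h : Fin n → ZMod 2, ((T h).card : ℝ) := by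
    rw [Finset.sum_const, Finset.card_univ, nsmul_eq_mul, hcard2]
    have : (2 : ℝ) ^ n * ((S.card : ℝ) / 2) = (2 ^ (n - 1) * S.card : ℕ) := by
      push_cast
      rw [show (2:ℝ)^n = 2 * 2^(n-1) by rw [← pow_succ']; congr 1; omega]
      ring
    rw [this]
    calc ((2 ^ (n - 1) * S.card : ℕ) : ℝ) ≤ ((∑ h : Fin n → ZMod 2, (T h).card : ℕ) : ℝ) := by
          exact_mod_cast key
      _ = _ := by push_cast; ring
  obtain ⟨h, _, hh⟩ := Finset.exists_le_of_sum_le (Finset.univ_nonempty) key'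
  refine ⟨h, ?_⟩
  calc η / 2 * (Fintype.card P : ℝ)
      ≤ (S.card : ℝ) / 2 := by linarith [hF]
    _ ≤ ((T h).card : ℝ) := hh
end

section
/- Let M, M' ∈ Mat_{ℓ×(n-ℓ)}(F_2) and let φ(M), φ(M') be the subspaces of F_2^n spanned by {(e_i, row_i(M)) : i ≤ ℓ} and {(e_i, row_i(M')) : i ≤ ℓ} respectively. Then rank(M - M') = 1 if and only if dim(φ(M) ∩ φ(M')) = ℓ - 1. (The map φ is a graph homomorphism/isomorphism between the degree-2 shortcode graph and the induced subgraph of the Grassmann graph on subspaces with full projection.) -/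
open Matrix

/-- The subspace of `F_2^{ℓ+k}` spanned by the rows `(e_i, row_i M)`. -/
def shortcodeEmb (ℓ k : ℕ) (M : Matrix (Fin ℓ) (Fin k) (ZMod 2)) :
    Submodule (ZMod 2) (Fin (ℓ + k) → ZMod 2) :=
  Submodule.span (ZMod 2) (Set.range fun i : Fin ℓ => Fin.append (Pi.single i 1) (M i))

section aux

variable (ℓ k : ℕ) (M M' : Matrix (Fin ℓ) (Fin k) (ZMod 2))

/-- The linear map `c ↦ (c, c ᵥ* M)`. -/
noncomputable def scMap : (Fin ℓ → ZMod 2) →ₗ[ZMod 2] (Fin (ℓ + k) → ZMod 2) where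
  toFun c := Fin.append c (Matrix.vecMul c M)
  map_add' c c' := by
    funext j
    refine Fin.addCases (fun i => ?_) (fun i => ?_) j <;>
      simp [Fin.append_left, Fin.append_right, Matrix.add_vecMul]
  map_smul' a c := by
    funext j
    refine Fin.addCases (fun i => ?_) (fun i => ?_) j <;>
      simp [Fin.append_left, Fin.append_right, Matrix.smul_vecMul]

lemma scMap_apply (c : Fin ℓ → ZMod 2) :
    scMap ℓ k M c = Fin.append c (Matrix.vecMul c M) := rfl

lemma scMap_injective : Function.Injective (scMap ℓ k M) := by
  intro c c' h
  funext i
  have := congrFun h (Fin.castAdd k i)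
  simpa [scMap_apply, Fin.append_left] using this

lemma range_scMap : LinearMap.range (scMap ℓ k M) = shortcodeEmb ℓ k M := by
  rw [LinearMap.range_eq_map, ← (Pi.basisFun (ZMod 2) (Fin ℓ)).span_eq,
    Submodule.map_span, ← Set.range_comp]
  have : (⇑(scMap ℓ k M) ∘ ⇑(Pi.basisFun (ZMod 2) (Fin ℓ)))
      = fun i => Fin.append (Pi.single i 1) (M i) := by
    funext i
    simp [Function.comp, scMap_apply, Pi.basisFun_apply, Matrix.single_one_vecMul]
    rfl
  rw [this, shortcodeEmb]

lemma inter_eq : shortcodeEmb ℓ k M ⊓ shortcodeEmb ℓ k M' =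
    Submodule.map (scMap ℓ k M) (LinearMap.ker (M - M').vecMulLinear) := by
  rw [← range_scMap ℓ k M, ← range_scMap ℓ k M']
  ext x
  simp only [Submodule.mem_inf, LinearMap.mem_range, Submodule.mem_map]
  constructor
  · rintro ⟨⟨c, rfl⟩, ⟨c', hc'⟩⟩
    have hcc : c' = c := by
      funext i
      have := congrFun hc' (Fin.castAdd k i)
      simpa [scMap_apply, Fin.append_left] using this
    rw [hcc] at hc'
    refine ⟨c, ?_, rfl⟩
    have : Matrix.vecMul c M' = Matrix.vecMul c M := by
      funext j
      have := congrFun hc' (Fin.natAdd ℓ j)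
      simpa [scMap_apply, Fin.append_right] using this
    simp only [LinearMap.mem_ker, Matrix.vecMulLinear_apply, Matrix.vecMul_sub, this,
      sub_self]
  · rintro ⟨c, hc, rfl⟩
    simp only [LinearMap.mem_ker, Matrix.vecMulLinear_apply, Matrix.vecMul_sub,
      sub_eq_zero] at hc
    exact ⟨⟨c, rfl⟩, ⟨c, by simp [scMap_apply, hc]⟩⟩

end aux

/-- `φ` is a graph isomorphism between the degree-2 shortcode graph and the induced
subgraph of the Grassmann graph: `rank (M - M') = 1` iff
`dim (φ(M) ⊓ φ(M')) = ℓ - 1`. -/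
theorem stmt_12 (ℓ k : ℕ) (hℓ : 0 < ℓ) (M M' : Matrix (Fin ℓ) (Fin k) (ZMod 2)) :
    (M - M').rank = 1 ↔
      Module.finrank (ZMod 2) ↥(shortcodeEmb ℓ k M ⊓ shortcodeEmb ℓ k M') = ℓ - 1 := by
  have key : Module.finrank (ZMod 2) ↥(shortcodeEmb ℓ k M ⊓ shortcodeEmb ℓ k M')
      = ℓ - (M - M').rank := by
    rw [inter_eq]
    rw [LinearEquiv.finrank_eq
      (Submodule.equivMapOfInjective _ (scMap_injective ℓ k M) _).symm]
    have hrk : Module.finrank (ZMod 2) (LinearMap.range (M - M').vecMulLinear)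
        = (M - M').rank := by
      rw [range_vecMulLinear, Matrix.rank_eq_finrank_span_row]
    have := LinearMap.finrank_range_add_finrank_ker (M - M').vecMulLinear
    rw [Module.finrank_fintype_fun_eq_card, Fintype.card_fin] at this
    omega
  rw [key]
  have hle : (M - M').rank ≤ ℓ := by
    simpa using (M - M').rank_le_card_height
  omega
end

section
/- If M ∈ Mat_{ℓ×(n-ℓ)}(F_2) and u ∈ F_2^ℓ, v ∈ F_2^{n-ℓ} are nonzero, then the subspace W spanned by {(e_i, row_i(M) + u_i v) : i ≤ ℓ} satisfies dim(W ∩ V) = ℓ - 1, where V is spanned by {(e_i, row_i(M)) : i ≤ ℓ}. Specifically, W ∩ V = { Σ_i λ_i (e_i, row_i(M)) : Σ_i λ_i u_i = 0 }. -/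
/-- If `u ≠ 0`, `v ≠ 0` and `W = span{(e_i, row_i M + u_i v)}`,
`V = span{(e_i, row_i M)}`, then `dim (W ⊓ V) = ℓ - 1` and
`W ⊓ V = { Σ_i λ_i (e_i, row_i M) : Σ_i λ_i u_i = 0 }`. -/
theorem stmt_13 (ℓ k : ℕ) (M : Matrix (Fin ℓ) (Fin k) (ZMod 2))
    (u : Fin ℓ → ZMod 2) (hu : u ≠ 0) (v : Fin k → ZMod 2) (hv : v ≠ 0)
    (V W : Submodule (ZMod 2) (Fin (ℓ + k) → ZMod 2))
    (hV : V = Submodule.span (ZMod 2)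
        (Set.range fun i : Fin ℓ => Fin.append (Pi.single i 1) (M i)))
    (hW : W = Submodule.span (ZMod 2)
        (Set.range fun i : Fin ℓ => Fin.append (Pi.single i 1) (M i + u i • v))) :
    Module.finrank (ZMod 2) ↥(W ⊓ V) = ℓ - 1 ∧
    (↑(W ⊓ V) : Set (Fin (ℓ + k) → ZMod 2))
      = {x | ∃ lam : Fin ℓ → ZMod 2, (∑ i, lam i * u i = 0) ∧
          x = ∑ i, lam i • Fin.append (Pi.single i 1) (M i)} := by
  classical
  have two : ∀ x : ZMod 2, x ≠ 0 → x = 1 := by decide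
  set F : Fin ℓ → Fin (ℓ + k) → ZMod 2 :=
    fun i => Fin.append (Pi.single i 1) (M i) with hF
  -- key computation
  have key : ∀ (c : Fin ℓ → ZMod 2) (a : Fin ℓ → Fin k → ZMod 2),
      ∑ i, c i • Fin.append (Pi.single i 1) (a i)
        = Fin.append c (fun j => ∑ i, c i * a i j) := by
    intro c a
    funext x
    rw [Finset.sum_apply]
    refine Fin.addCases (fun j => ?_) (fun j => ?_) x
    · simp [Fin.append_left, Pi.single_apply]
    · simp [Fin.append_right]
  let f : (Fin ℓ → ZMod 2) →ₗ[ZMod 2] (Fin (ℓ + k) → ZMod 2) :=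
    Fintype.linearCombination (ZMod 2) F
  let φ : (Fin ℓ → ZMod 2) →ₗ[ZMod 2] ZMod 2 :=
    Fintype.linearCombination (ZMod 2) u
  have hfapp : ∀ c, f c = Fin.append c (fun j => ∑ i, c i * M i j) := by
    intro c
    rw [show f c = ∑ i, c i • F i from Fintype.linearCombination_apply _ _ _]
    exact key c (fun i => M i)
  have hφapp : ∀ c, φ c = ∑ i, c i * u i := by
    intro c
    rw [show φ c = ∑ i, c i • u i from Fintype.linearCombination_apply _ _ _]
    rfl
  have hfinj : Function.Injective f := by
    intro c d h
    funext j
    have := congrFun (hfapp c ▸ hfapp d ▸ h) (Fin.castAdd k j)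
    simpa [Fin.append_left] using this
  -- intersection equals image of ker φ
  have hWV : W ⊓ V = Submodule.map f (LinearMap.ker φ) := by
    ext x
    simp only [Submodule.mem_inf, hV, hW, Submodule.mem_map, LinearMap.mem_ker]
    constructor
    · rintro ⟨hxW, hxV⟩
      rw [Submodule.mem_span_range_iff_exists_fun] at hxW hxV
      obtain ⟨d, hd⟩ := hxW
      obtain ⟨c, hc⟩ := hxV
      rw [key] at hd
      simp only [hF] at hc
      rw [key c (fun i => M i)] at hc
      have hdc : d = c := by
        funext j
        have := congrFun (hd.trans hc.symm) (Fin.castAdd k j)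
        simpa [Fin.append_left] using this
      subst hdc
      have hsum : ∀ j, (∑ i, d i * u i) * v j = 0 := by
        intro j
        have h2 := congrFun (hd.trans hc.symm) (Fin.natAdd ℓ j)
        simp only [Fin.append_right] at h2
        have h3 : (∑ i, d i * M i j) + (∑ i, d i * u i) * v j
            = ∑ i, d i * M i j := by
          rw [Finset.sum_mul, ← Finset.sum_add_distrib, ← h2]
          refine Finset.sum_congr rfl fun i _ => ?_
          simp only [Pi.add_apply, Pi.smul_apply, smul_eq_mul]
          ring
        exact add_eq_left.1 h3
      obtain ⟨j0, hj0⟩ : ∃ j, v j ≠ 0 := by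
        by_contra h
        push_neg at h
        exact hv (funext h)
      have hker : ∑ i, d i * u i = 0 := by
        have := hsum j0
        rw [two (v j0) hj0, mul_one] at this
        exact this
      exact ⟨d, by rw [hφapp]; exact hker, by rw [hfapp]; exact hc⟩
    · rintro ⟨c, hcker, rfl⟩
      rw [hφapp] at hcker
      constructor
      · rw [Submodule.mem_span_range_iff_exists_fun]
        refine ⟨c, ?_⟩
        rw [key, hfapp c]
        have h2 : (fun j => ∑ i, c i * (M i + u i • v) j)
            = fun j => ∑ i, c i * M i j := by
          funext j
          have hterm : ∀ i : Fin ℓ, c i * (M i + u i • v) j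
              = c i * M i j + c i * u i * v j := by
            intro i
            simp only [Pi.add_apply, Pi.smul_apply, smul_eq_mul]
            ring
          rw [Finset.sum_congr rfl fun i _ => hterm i, Finset.sum_add_distrib,
            ← Finset.sum_mul, hcker, zero_mul, add_zero]
        rw [h2]
      · rw [Submodule.mem_span_range_iff_exists_fun]
        exact ⟨c, by simp only [hF]; rw [key c (fun i => M i)]; exact (hfapp c).symm⟩
  -- dimension of ker φ
  have hφsurj : Function.Surjective φ := by
    obtain ⟨j, hj⟩ := Function.ne_iff.1 hu
    intro x
    refine ⟨x • Pi.single j 1, ?_⟩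
    rw [map_smul, hφapp, smul_eq_mul]
    have : ∑ i, (Pi.single j 1 : Fin ℓ → ZMod 2) i * u i = u j := by
      simp [Pi.single_apply, Finset.sum_ite_eq]
    rw [this, two (u j) hj, mul_one]
  have hrange : LinearMap.range φ = ⊤ := LinearMap.range_eq_top.2 hφsurj
  have hrk : Module.finrank (ZMod 2) (LinearMap.range φ)
      + Module.finrank (ZMod 2) (LinearMap.ker φ) = ℓ := by
    rw [LinearMap.finrank_range_add_finrank_ker]
    simp [Module.finrank_pi]
  rw [hrange, finrank_top, Module.finrank_self] at hrk
  have hker_dim : Module.finrank (ZMod 2) (LinearMap.ker φ) = ℓ - 1 := by omega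
  constructor
  · rw [hWV, ← hker_dim]
    exact (Submodule.equivMapOfInjective f hfinj (LinearMap.ker φ)).finrank_eq.symm
  · rw [hWV]
    ext x
    simp only [SetLike.mem_coe, Submodule.mem_map, LinearMap.mem_ker, Set.mem_setOf_eq]
    constructor
    · rintro ⟨c, hc, rfl⟩
      refine ⟨c, by rw [hφapp] at hc; exact hc, ?_⟩
      rw [hfapp c]; exact (key c _).symm
    · rintro ⟨c, hc, rfl⟩
      exact ⟨c, by rw [hφapp]; exact hc,
        by rw [hfapp c]; exact (key c _).symm⟩
end

section
/- Let V be an ℓ-dimensional subspace of F_2^n (ℓ < n) whose projection to the first ℓ coordinates is full-dimensional. Sample a uniformly random neighbor V' of V in the Grassmann graph by: choosing a uniformly random (ℓ-1)-dimensional subspace U ⊂ V and a uniformly random vector w ∉ V, setting V' = span(U ∪ {w}) — equivalently by replacing one basis vector. Then the probability that V' also has full-dimensional projection to the first ℓ coordinates is at least 1/2. -/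
/-- The linear projection onto the first ℓ coordinates. -/
def projFirst (ℓ k : ℕ) : (Fin (ℓ + k) → ZMod 2) →ₗ[ZMod 2] (Fin ℓ → ZMod 2) :=
  LinearMap.funLeft (ZMod 2) (ZMod 2) (Fin.castAdd k)

open Module Submodule

/-- A hyperplane plus an outside vector spans everything (over `ZMod 2`, dims). -/
lemma aux_hyperplane_sup {ℓ : ℕ} (hℓ : 0 < ℓ)
    (W : Submodule (ZMod 2) (Fin ℓ → ZMod 2))
    (hW : finrank (ZMod 2) W = ℓ - 1) {x : Fin ℓ → ZMod 2} (hx : x ∉ W) :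
    W ⊔ span (ZMod 2) {x} = ⊤ := by
  have htot : finrank (ZMod 2) (Fin ℓ → ZMod 2) = ℓ := Module.finrank_fin_fun _
  apply Submodule.eq_top_of_finrank_eq
  rw [htot]
  have hlt : W < W ⊔ span (ZMod 2) {x} := by
    refine lt_of_le_of_ne le_sup_left fun h => hx ?_
    rw [h]
    exact Submodule.mem_sup_right (mem_span_singleton_self x)
  have h1 : finrank (ZMod 2) W < finrank (ZMod 2) (W ⊔ span (ZMod 2) {x} : Submodule (ZMod 2) (Fin ℓ → ZMod 2)) :=
    Submodule.finrank_lt_finrank_of_lt hlt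
  have h2 : finrank (ZMod 2) (W ⊔ span (ZMod 2) {x} : Submodule (ZMod 2) (Fin ℓ → ZMod 2)) ≤ ℓ := by
    simpa [htot] using Submodule.finrank_le (W ⊔ span (ZMod 2) {x})
  omega

/-- In char 2, two vectors outside a hyperplane sum into it. -/
lemma aux_add_mem {ℓ : ℕ} (hℓ : 0 < ℓ)
    (W : Submodule (ZMod 2) (Fin ℓ → ZMod 2))
    (hW : finrank (ZMod 2) W = ℓ - 1) {x y : Fin ℓ → ZMod 2}
    (hx : x ∉ W) (hy : y ∉ W) : x + y ∈ W := by
  have htop := aux_hyperplane_sup hℓ W hW hx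
  have hy' : y ∈ W ⊔ span (ZMod 2) {x} := htop ▸ mem_top
  rcases Submodule.mem_sup.1 hy' with ⟨u, hu, s, hs, hsum⟩
  rcases Submodule.mem_span_singleton.1 hs with ⟨c, rfl⟩
  have hc : c = 0 ∨ c = 1 := by
    have h2 : ∀ a : ZMod 2, a = 0 ∨ a = 1 := by decide
    exact h2 c
  rcases hc with rfl | rfl
  · exfalso; apply hy; rw [← hsum]; simpa using hu
  · have hxx : x + x = 0 := by
      funext i; simp only [Pi.add_apply]
      have : ∀ a : ZMod 2, a + a = 0 := by decide
      exact this _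
    have : x + y = u + (x + x) := by rw [← hsum, one_smul]; abel
    rw [this, hxx, add_zero]; exact hu

/-- If `V` is an ℓ-dimensional subspace of `F_2^{ℓ+k}` (`k ≥ 1`) with full-dimensional
projection to the first ℓ coordinates, and a random neighbor `V' = span(U ∪ {w})` is
sampled by picking a uniform `(ℓ-1)`-dimensional `U ⊆ V` and a uniform `w ∉ V`, then
`V'` has full-dimensional projection with probability at least 1/2. -/
theorem stmt_18 (ℓ k : ℕ) (hℓ : 0 < ℓ) (hk : 0 < k)
    (V : Submodule (ZMod 2) (Fin (ℓ + k) → ZMod 2))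
    (hdim : Module.finrank (ZMod 2) V = ℓ)
    (hfull : Submodule.map (projFirst ℓ k) V = ⊤) :
    (1 / 2 : ℝ) *
        (Nat.card {p : Submodule (ZMod 2) (Fin (ℓ + k) → ZMod 2) ×
            (Fin (ℓ + k) → ZMod 2) //
          p.1 ≤ V ∧ Module.finrank (ZMod 2) p.1 = ℓ - 1 ∧ p.2 ∉ V} : ℝ)
      ≤ (Nat.card {p : Submodule (ZMod 2) (Fin (ℓ + k) → ZMod 2) ×
            (Fin (ℓ + k) → ZMod 2) //
          (p.1 ≤ V ∧ Module.finrank (ZMod 2) p.1 = ℓ - 1 ∧ p.2 ∉ V) ∧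
          Submodule.map (projFirst ℓ k)
            (p.1 ⊔ Submodule.span (ZMod 2) {p.2}) = ⊤} : ℝ) := by
  classical
  set π := projFirst ℓ k with hπ
  have htot : finrank (ZMod 2) (Fin ℓ → ZMod 2) = ℓ := Module.finrank_fin_fun _
  -- π is injective on V
  have hinjV : ∀ u ∈ V, π u = 0 → u = 0 := by
    intro u hu hu0
    set f : V →ₗ[ZMod 2] (Fin ℓ → ZMod 2) := π.comp V.subtype with hf
    have hrange : LinearMap.range f = ⊤ := by
      rw [hf, LinearMap.range_comp, Submodule.range_subtype, hfull]
    have hrn := LinearMap.finrank_range_add_finrank_ker f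
    rw [hrange, finrank_top, htot, hdim] at hrn
    have hker : LinearMap.ker f = ⊥ := by
      rw [← Submodule.finrank_eq_zero (S := LinearMap.ker f)]; omega
    have : (⟨u, hu⟩ : V) ∈ LinearMap.ker f := by
      simp [hf, LinearMap.mem_ker, hu0]
    rw [hker, Submodule.mem_bot] at this
    exact congrArg Subtype.val this
  -- rank-preservation for subspaces of V
  have hrankmap : ∀ U : Submodule (ZMod 2) (Fin (ℓ + k) → ZMod 2), U ≤ V →
      finrank (ZMod 2) (Submodule.map π U) = finrank (ZMod 2) U := by
    intro U hU
    set g : U →ₗ[ZMod 2] (Fin ℓ → ZMod 2) := π.comp U.subtype with hg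
    have hrange : LinearMap.range g = Submodule.map π U := by
      rw [hg, LinearMap.range_comp, Submodule.range_subtype]
    have hker : LinearMap.ker g = ⊥ := by
      rw [LinearMap.ker_eq_bot']
      intro m hm
      have : (m : Fin (ℓ + k) → ZMod 2) = 0 := hinjV m (hU m.2) hm
      exact Subtype.ext this
    have hrn := LinearMap.finrank_range_add_finrank_ker g
    rw [hrange, hker, finrank_bot] at hrn
    omega
  -- existence of v ∈ V with π v ∉ π U, for U ≤ V with finrank U = ℓ - 1
  have hexists : ∀ U : Submodule (ZMod 2) (Fin (ℓ + k) → ZMod 2), U ≤ V →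
      finrank (ZMod 2) U = ℓ - 1 → ∃ v, v ∈ V ∧ π v ∉ Submodule.map π U := by
    intro U hU hdU
    by_contra h
    push_neg at h
    have hle : Submodule.map π V ≤ Submodule.map π U := by
      rintro x ⟨v, hv, rfl⟩; exact h v hv
    rw [hfull, top_le_iff] at hle
    have := hrankmap U hU
    rw [hle, finrank_top, htot, hdU] at this
    omega
  -- goodness criterion
  have hgood : ∀ (U : Submodule (ZMod 2) (Fin (ℓ + k) → ZMod 2)) (w : Fin (ℓ + k) → ZMod 2),
      Submodule.map π (U ⊔ span (ZMod 2) {w}) =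
        Submodule.map π U ⊔ span (ZMod 2) {π w} := by
    intro U w
    rw [Submodule.map_sup, Submodule.map_span, Set.image_singleton]
  -- set up types
  set P : (Submodule (ZMod 2) (Fin (ℓ + k) → ZMod 2) × (Fin (ℓ + k) → ZMod 2)) → Prop :=
    fun p => p.1 ≤ V ∧ Module.finrank (ZMod 2) p.1 = ℓ - 1 ∧ p.2 ∉ V with hP
  set Q : (Submodule (ZMod 2) (Fin (ℓ + k) → ZMod 2) × (Fin (ℓ + k) → ZMod 2)) → Prop :=
    fun p => Submodule.map π (p.1 ⊔ span (ZMod 2) {p.2}) = ⊤ with hQ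
  -- choice function
  have vchoice : ∀ U : Submodule (ZMod 2) (Fin (ℓ + k) → ZMod 2),
      ∃ v, (U ≤ V ∧ finrank (ZMod 2) U = ℓ - 1) → v ∈ V ∧ π v ∉ Submodule.map π U := by
    intro U
    by_cases h : U ≤ V ∧ finrank (ZMod 2) U = ℓ - 1
    · obtain ⟨v, hv⟩ := hexists U h.1 h.2
      exact ⟨v, fun _ => hv⟩
    · exact ⟨0, fun h' => absurd h' h⟩
  choose vf hvf using vchoice
  -- injection from bad to good
  have hBG : Nat.card {p // P p ∧ ¬ Q p} ≤ Nat.card {p // P p ∧ Q p} := by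
    apply Nat.card_le_card_of_injective
      (fun x => (⟨(x.1.1, x.1.2 + vf x.1.1), by
        obtain ⟨⟨hU, hdU, hw⟩, hbad⟩ := x.2
        obtain ⟨hvV, hvπ⟩ := hvf x.1.1 ⟨hU, hdU⟩
        have hrk : finrank (ZMod 2) (Submodule.map π x.1.1) = ℓ - 1 := by
          rw [hrankmap _ hU, hdU]
        -- π x.1.2 ∈ map π U
        have hπw : π x.1.2 ∈ Submodule.map π x.1.1 := by
          by_contra hout
          refine hbad ?_
          show Submodule.map π _ = ⊤
          rw [hgood]; exact aux_hyperplane_sup hℓ _ hrk hout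
        -- π (w + v) ∉ map π U
        have hsum : π (x.1.2 + vf x.1.1) ∉ Submodule.map π x.1.1 := by
          rw [map_add]
          intro hmem
          exact hvπ (by simpa using Submodule.sub_mem _ hmem hπw)
        refine ⟨⟨hU, hdU, fun hmem => hw ?_⟩, ?_⟩
        · simpa using Submodule.sub_mem _ hmem hvV
        · show Submodule.map π _ = ⊤
          rw [hgood]; exact aux_hyperplane_sup hℓ _ hrk hsum⟩ :
          {p // P p ∧ Q p}))
    intro a b hab
    have h1 : a.1.1 = b.1.1 := congrArg (fun z => z.1.1) hab
    have h2 : a.1.2 + vf a.1.1 = b.1.2 + vf b.1.1 := congrArg (fun z => z.1.2) hab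
    rw [h1] at h2
    have h3 : a.1.2 = b.1.2 := by exact add_right_cancel h2
    exact Subtype.ext (Prod.ext h1 h3)
  -- split whole set
  have hsplit : Nat.card {p // P p} =
      Nat.card {p // P p ∧ Q p} + Nat.card {p // P p ∧ ¬ Q p} := by
    have e1 : {x : {p // P p} // Q x.1} ⊕ {x : {p // P p} // ¬ Q x.1} ≃ {p // P p} :=
      Equiv.sumCompl _
    rw [← Nat.card_congr e1, Nat.card_sum,
      Nat.card_congr (Equiv.subtypeSubtypeEquivSubtypeInter P Q),
      Nat.card_congr (Equiv.subtypeSubtypeEquivSubtypeInter P (fun p => ¬ Q p))]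
  have hmain : Nat.card {p // P p} ≤ 2 * Nat.card {p // P p ∧ Q p} := by omega
  have := hmain
  rw [hP, hQ] at this
  push_cast
  have hcast : (Nat.card {p : Submodule (ZMod 2) (Fin (ℓ + k) → ZMod 2) ×
      (Fin (ℓ + k) → ZMod 2) //
      p.1 ≤ V ∧ Module.finrank (ZMod 2) p.1 = ℓ - 1 ∧ p.2 ∉ V} : ℝ) ≤
      2 * (Nat.card {p : Submodule (ZMod 2) (Fin (ℓ + k) → ZMod 2) ×
      (Fin (ℓ + k) → ZMod 2) //
      (p.1 ≤ V ∧ Module.finrank (ZMod 2) p.1 = ℓ - 1 ∧ p.2 ∉ V) ∧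
      Submodule.map π (p.1 ⊔ span (ZMod 2) {p.2}) = ⊤} : ℝ) := by
    exact_mod_cast this
  linarith
end
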